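/- Let (A,·,α) be a Hom-pre-Lie algebra and (V,β,ρ,μ) a representation with α and β invertible. Define Ad ∈ gl(Hom(A,V)) by Ad(f) = β ∘ f ∘ α^{-1}, and define ρ̂ : A → gl(Hom(A,V)) by ρ̂(x)(f)(y) = ρ(x)(f(α^{-1}(y))) + μ(y)(f(α^{-1}(x))) − Ad(f)(α^{-1}(x·y)). Then ρ̂ is a representation of the sub-adjacent Hom-Lie algebra A^C on the vector space Hom(A,V) with respect to Ad. -/
import Mathlib


/-- A Hom-pre-Lie algebra structure on `A`: a bilinear product and an algebra
morphism `α` satisfying the Hom-pre-Lie identity. -/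
def IsHomPreLie {K A : Type*} [Field K] [AddCommGroup A] [Module K A]
    (mul : A →ₗ[K] A →ₗ[K] A) (α : A →ₗ[K] A) : Prop :=
  (∀ x y, α (mul x y) = mul (α x) (α y)) ∧
  (∀ x y z, mul (mul x y) (α z) - mul (α x) (mul y z)
      = mul (mul y x) (α z) - mul (α y) (mul x z))

/-- A representation of a Hom-Lie algebra `(L, bracket, α)` on `V` with respect to `β`. -/
def IsHomLieRep {K L V : Type*} [Field K] [AddCommGroup L] [Module K L]
    [AddCommGroup V] [Module K V]
    (bracket : L →ₗ[K] L →ₗ[K] L) (α : L →ₗ[K] L)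
    (β : V →ₗ[K] V) (ρ : L →ₗ[K] Module.End K V) : Prop :=
  (∀ x, ρ (α x) ∘ₗ β = β ∘ₗ ρ x) ∧
  (∀ x y, ρ (bracket x y) ∘ₗ β = ρ (α x) ∘ₗ ρ y - ρ (α y) ∘ₗ ρ x)

/-- A representation `(V, β, ρ, μ)` of a Hom-pre-Lie algebra `(A, mul, α)`:
`ρ` is a representation of the sub-adjacent Hom-Lie algebra (whose bracket is the
commutator `mul - mul.flip`) with respect to `β`, together with the two compatibility
conditions for `μ`. -/
def IsHomPreLieRep {K A V : Type*} [Field K] [AddCommGroup A] [Module K A]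
    [AddCommGroup V] [Module K V]
    (mul : A →ₗ[K] A →ₗ[K] A) (α : A →ₗ[K] A)
    (β : V →ₗ[K] V) (ρ μ : A →ₗ[K] Module.End K V) : Prop :=
  IsHomLieRep (mul - mul.flip) α β ρ ∧
  (∀ x, β ∘ₗ μ x = μ (α x) ∘ₗ β) ∧
  (∀ x y, μ (α y) ∘ₗ μ x - μ (mul x y) ∘ₗ β = μ (α y) ∘ₗ ρ x - ρ (α x) ∘ₗ μ y)

/-- `Ad(f) = β ∘ f ∘ α⁻¹` on `Hom(A,V)`. -/
def AdMap {K A V : Type*} [Field K] [AddCommGroup A] [Module K A]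
    [AddCommGroup V] [Module K V]
    (α : A ≃ₗ[K] A) (β : V →ₗ[K] V) : Module.End K (A →ₗ[K] V) where
  toFun f := β ∘ₗ f ∘ₗ (α.symm : A →ₗ[K] A)
  map_add' f g := by ext a; simp
  map_smul' c f := by ext a; simp

/-- `ρ̂ : A → gl(Hom(A,V))`, defined by
`ρ̂(x)(f)(y) = ρ(x)(f(α⁻¹ y)) + μ(y)(f(α⁻¹ x)) − β(f(α⁻¹(x·y)))`. -/
def hatRho {K A V : Type*} [Field K] [AddCommGroup A] [Module K A]
    [AddCommGroup V] [Module K V]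
    (mul : A →ₗ[K] A →ₗ[K] A) (α : A ≃ₗ[K] A) (β : V →ₗ[K] V)
    (ρ μ : A →ₗ[K] Module.End K V) : A →ₗ[K] Module.End K (A →ₗ[K] V) where
  toFun x :=
    { toFun := fun f =>
        ρ x ∘ₗ f ∘ₗ (α.symm : A →ₗ[K] A)
          + (μ : A →ₗ[K] V →ₗ[K] V).flip (f (α.symm x))
          - β ∘ₗ f ∘ₗ ((α.symm : A →ₗ[K] A) ∘ₗ (α.symm : A →ₗ[K] A) ∘ₗ mul x)
      map_add' := fun f g => by ext a; simp; abel
      map_smul' := fun c f => by ext a; simp [smul_sub] }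
  map_add' x y := by
    ext f a
    simp [map_add]
    abel
  map_smul' c x := by
    ext f a
    simp [smul_sub]

/-- Let `(A,·,α)` be a Hom-pre-Lie algebra and `(V,β,ρ,μ)` a
representation with `α`, `β` invertible.  Then `ρ̂` is a representation of the
sub-adjacent Hom-Lie algebra `A^C` on `Hom(A,V)` with respect to `Ad`, where
`Ad(f) = β ∘ f ∘ α⁻¹` and
`ρ̂(x)(f)(y) = ρ(x)(f(α⁻¹ y)) + μ(y)(f(α⁻¹ x)) − Ad(f)(α⁻¹(x·y))`. -/
theorem hatRho_isHomLieRep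
    {K A V : Type*} [Field K] [AddCommGroup A] [Module K A]
    [AddCommGroup V] [Module K V]
    (mul : A →ₗ[K] A →ₗ[K] A) (α : A ≃ₗ[K] A)
    (hA : IsHomPreLie mul (α : A →ₗ[K] A))
    (β : V ≃ₗ[K] V) (ρ μ : A →ₗ[K] Module.End K V)
    (hrep : IsHomPreLieRep mul (α : A →ₗ[K] A) (β : V →ₗ[K] V) ρ μ) :
    IsHomLieRep (mul - mul.flip) (α : A →ₗ[K] A)
      (AdMap α (β : V →ₗ[K] V)) (hatRho mul α (β : V →ₗ[K] V) ρ μ) := by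
  obtain ⟨⟨hρ1, hρ2⟩, hμ1, hμ2⟩ := hrep
  -- pointwise versions
  have pρ1 : ∀ x v, β ((ρ x) v) = (ρ (α x)) (β v) := fun x v => by
    simpa using (LinearMap.congr_fun (hρ1 x) v).symm
  have pμ1 : ∀ x v, β ((μ x) v) = (μ (α x)) (β v) := fun x v => by
    simpa using LinearMap.congr_fun (hμ1 x) v
  have pρ2 : ∀ x y v, (ρ (mul x y)) (β v) - (ρ (mul y x)) (β v)
      = (ρ (α x)) ((ρ y) v) - (ρ (α y)) ((ρ x) v) := fun x y v => by
    simpa [LinearMap.sub_apply] using LinearMap.congr_fun (hρ2 x y) v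
  have pμ2 : ∀ x y v, (μ (α y)) ((μ x) v) - (μ (mul x y)) (β v)
      = (μ (α y)) ((ρ x) v) - (ρ (α x)) ((μ y) v) := fun x y v => by
    simpa [LinearMap.sub_apply] using LinearMap.congr_fun (hμ2 x y) v
  have hA1 : ∀ u v : A, α (mul u v) = mul (α u) (α v) := fun u v => by
    simpa using hA.1 u v
  have hαm : ∀ u v : A, α.symm (mul u v) = mul (α.symm u) (α.symm v) := fun u v => by
    apply α.injective; simp [hA1]
  constructor
  · intro x
    ext f a
    simp [hatRho, AdMap, hαm, pρ1, pμ1]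
  · intro x y
    ext f a
    simp only [hatRho, AdMap, LinearMap.coe_mk, AddHom.coe_mk, LinearMap.coe_comp,
      LinearEquiv.coe_coe, Function.comp_apply, LinearMap.sub_apply, LinearMap.add_apply,
      LinearMap.flip_apply, hαm, hA1, LinearEquiv.symm_apply_apply,
      LinearEquiv.apply_symm_apply, map_sub, map_add, pρ1, pμ1, LinearMap.sub_apply]
    have ex := pμ2 x (α.symm a) (f (α.symm y))
    have ey := pμ2 y (α.symm a) (f (α.symm x))
    simp only [LinearEquiv.apply_symm_apply] at ex ey
    have eρ := pρ2 x y (f (α.symm (α.symm a)))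
    have hpre := hA.2 (α.symm (α.symm (α.symm x))) (α.symm (α.symm (α.symm y)))
      (α.symm (α.symm (α.symm (α.symm a))))
    simp only [LinearEquiv.coe_coe, LinearEquiv.apply_symm_apply] at hpre
    have e9 := congrArg (fun z : A => β (β (f z))) hpre
    simp only [map_sub] at e9
    linear_combination (norm := module) eρ - e9 - ex + ey
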